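/- For all u in (0,1), the expression π_out(0,u) = (1−u)⁶ / ((1 − 2u + 2u²)(1 − 4u + 5u² − 2u³ + u⁴)) satisfies the symmetry π_out(0,u) + π_out(0,1−u) = 1. -/

import Mathlib

noncomputable def piOutZero (u : ℝ) : ℝ :=
  (1 - u) ^ 6 / ((1 - 2 * u + 2 * u ^ 2) * (1 - 4 * u + 5 * u ^ 2 - 2 * u ^ 3 + u ^ 4))

/-!
Both factors of the denominator are polynomials in `s = u (1 - u)`, namely `1 - 2 s` and
`1 - 4 s + s ^ 2`, so the denominator is invariant under `u ↦ 1 - u`; their product is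
`u ^ 6 + (1 - u) ^ 6`, and `s ≤ 1 / 4` keeps both factors positive.
-/

def piOutZeroDenom (u : ℝ) : ℝ :=
  (1 - 2 * u + 2 * u ^ 2) * (1 - 4 * u + 5 * u ^ 2 - 2 * u ^ 3 + u ^ 4)

theorem piOutZero_eq_div (u : ℝ) : piOutZero u = (1 - u) ^ 6 / piOutZeroDenom u := rfl

theorem piOutZeroDenom_eq (u : ℝ) :
    piOutZeroDenom u = (1 - 2 * (u * (1 - u))) * (1 - 4 * (u * (1 - u)) + (u * (1 - u)) ^ 2) := by
  unfold piOutZeroDenom; ring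

theorem piOutZeroDenom_one_sub (u : ℝ) : piOutZeroDenom (1 - u) = piOutZeroDenom u := by
  rw [piOutZeroDenom_eq, piOutZeroDenom_eq, sub_sub_cancel, mul_comm (1 - u)]

theorem piOutZeroDenom_pos (u : ℝ) : 0 < piOutZeroDenom u := by
  rw [piOutZeroDenom_eq]
  have hs : u * (1 - u) ≤ 1 / 4 := by nlinarith [sq_nonneg (2 * u - 1)]
  apply mul_pos <;> nlinarith [sq_nonneg (u * (1 - u))]

theorem pow_six_add_one_sub_pow_six (u : ℝ) : u ^ 6 + (1 - u) ^ 6 = piOutZeroDenom u := by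
  unfold piOutZeroDenom; ring

theorem piOutZero_symmetry_general (u : ℝ) :
    piOutZero u + piOutZero (1 - u) = 1 := by
  rw [piOutZero_eq_div, piOutZero_eq_div, piOutZeroDenom_one_sub, sub_sub_cancel, ← add_div,
    add_comm, pow_six_add_one_sub_pow_six, div_self (piOutZeroDenom_pos u).ne']

theorem piOutZero_symmetry (u : ℝ) (h0 : 0 < u) (h1 : u < 1) :
    piOutZero u + piOutZero (1 - u) = 1 :=
  piOutZero_symmetry_general u
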